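/- arXiv:2302.06479 — 3 statements merged into one kernel-verified Lean document; each statement's English description precedes it below -/
import Mathlib

section
/- Let V : ℝ_{≥0} × ℝ^n → ℝ be continuously differentiable and suppose there exist z : ℝ_{≥0} × ℝ^n → ℝ^n and c₁ ≥ 0 with ∇_x V(t,x) = E(t,x)^T z(t,x) and ∂_t V(t,x) + z(t,x)^T F(t,x) ≤ −c₁‖x‖², and constants c₂, c₃ > 0 with c₂‖x‖² ≤ V(t,x) ≤ c₃‖x‖². If for every (t₀, x₀) the initial value problem E(t,x)ẋ = F(t,x), x(t₀) = x₀ has a unique solution on [t₀, ∞), then the equilibrium point 0 is uniformly stable: for each ε > 0 there exists δ > 0 (e.g. δ = sqrt(c₂/c₃)·ε) such that for all t₀ ≥ 0 and ‖x₀‖ < δ, the solution satisfies ‖x(t)‖ < ε for all t ≥ t₀. -/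
/-!
Along a solution `x` of `E(t,x) ẋ = F(t,x)` the chain rule and `∇ₓV = Eᵀ z` give
`d/dt V(t, x(t)) = ∂ₜV + zᵀ E ẋ = ∂ₜV + zᵀ F ≤ -c₁‖x‖² ≤ 0`, so `t ↦ V(t, x(t))` is nonincreasing.
Hence `c₂‖x(t)‖² ≤ V(t, x(t)) ≤ V(t₀, x₀) ≤ c₃‖x₀‖²`, and `‖x₀‖ < √(c₂/c₃) ε` forces `‖x(t)‖ < ε`.
-/

open Matrix Set

theorem DifferentiableAt.hasDerivAt_comp_prodMk {E G : Type*} [NormedAddCommGroup E]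
    [NormedSpace ℝ E] [NormedAddCommGroup G] [NormedSpace ℝ G] {W : ℝ × E → G} {y : ℝ → E}
    {u : ℝ} {d : E} {a b : G} (hW : DifferentiableAt ℝ W (u, y u)) (hy : HasDerivAt y d u)
    (ht : HasDerivAt (fun r => W (r, y u)) a u)
    (hx : HasDerivAt (fun r : ℝ => W (u, y u + r • d)) b 0) :
    HasDerivAt (fun r => W (r, y r)) (a + b) u := by
  set L := fderiv ℝ W (u, y u)
  have hL : HasFDerivAt W L (u, y u) := hW.hasFDerivAt
  have ha : L (1, 0) = a :=
    (hL.comp_hasDerivAt u ((hasDerivAt_id u).prodMk (hasDerivAt_const u (y u)))).unique ht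
  have hb : L (0, d) = b := by
    have hline : HasDerivAt (fun r : ℝ => (u, y u + r • d)) ((0 : ℝ), d) 0 :=
      (hasDerivAt_const 0 u).prodMk
        (by simpa using ((hasDerivAt_id (0 : ℝ)).smul_const d).const_add (y u))
    have hL0 : HasFDerivAt W L ((fun r : ℝ => (u, y u + r • d)) 0) := by simpa using hL
    have hcomp : HasDerivAt (fun r : ℝ => W (u, y u + r • d)) (L (0, d)) 0 :=
      hL0.comp_hasDerivAt 0 hline
    exact hcomp.unique hx
  have hsplit : ((1 : ℝ), d) = ((1 : ℝ), (0 : E)) + ((0 : ℝ), d) := by simp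
  have hcurve := hL.comp_hasDerivAt u ((hasDerivAt_id u).prodMk hy)
  rwa [hsplit, L.map_add, ha, hb] at hcurve

theorem antitoneOn_of_hasDerivAt_nonpos {D : Set ℝ} (hD : Convex ℝ D) {f f' : ℝ → ℝ}
    (hf : ∀ x ∈ D, HasDerivAt f (f' x) x) (hf' : ∀ x ∈ D, f' x ≤ 0) : AntitoneOn f D :=
  antitoneOn_of_deriv_nonpos hD (fun x hx => (hf x hx).continuousAt.continuousWithinAt)
    (fun x hx => (hf x (interior_subset hx)).differentiableAt.differentiableWithinAt)
    fun x hx => (hf x (interior_subset hx)).deriv ▸ hf' x (interior_subset hx)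

theorem antitoneOn_lyapunov_comp_solution {n : ℕ}
    {E : ℝ → (Fin n → ℝ) → Matrix (Fin n) (Fin n) ℝ} {F : ℝ → (Fin n → ℝ) → (Fin n → ℝ)}
    {V Vt : ℝ → (Fin n → ℝ) → ℝ} {z : ℝ → (Fin n → ℝ) → Fin n → ℝ} {x : ℝ → Fin n → ℝ}
    {t₀ : ℝ} (ht₀ : 0 ≤ t₀)
    (hV : Differentiable ℝ (fun p : ℝ × (Fin n → ℝ) => V p.1 p.2))
    (hgrad : ∀ t x h, 0 ≤ t →
      HasDerivAt (fun s : ℝ => V t (x + s • h)) ((((E t x)ᵀ) *ᵥ z t x) ⬝ᵥ h) 0)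
    (hVt : ∀ t x, 0 ≤ t → HasDerivAt (fun s => V s x) (Vt t x) t)
    (hdec : ∀ t x, 0 ≤ t → Vt t x + z t x ⬝ᵥ F t x ≤ 0)
    (hsol : ∀ t, t₀ ≤ t → ∃ d, HasDerivAt x d t ∧ E t (x t) *ᵥ d = F t (x t)) :
    AntitoneOn (fun t => V t (x t)) (Ici t₀) := by
  refine antitoneOn_of_hasDerivAt_nonpos (convex_Ici t₀)
    (f' := fun t => Vt t (x t) + z t (x t) ⬝ᵥ F t (x t)) (fun t ht => ?_)
    fun t ht => hdec t (x t) (ht₀.trans ht)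
  have ht0 : 0 ≤ t := ht₀.trans ht
  obtain ⟨d, hd, hEd⟩ := hsol t ht
  have hgradF : ((E t (x t))ᵀ *ᵥ z t (x t)) ⬝ᵥ d = z t (x t) ⬝ᵥ F t (x t) := by
    rw [mulVec_transpose, ← dotProduct_mulVec, hEd]
  exact hgradF ▸ DifferentiableAt.hasDerivAt_comp_prodMk (hV _) hd (hVt t (x t) ht0) (hgrad t (x t) d ht0)

theorem Real.sqrt_lt_of_mul_le_mul {a b c₂ c₃ ε : ℝ} (hc₂ : 0 < c₂) (hc₃ : 0 < c₃)
    (hε : 0 < ε) (hab : c₂ * a ≤ c₃ * b) (hb : √b < √(c₂ / c₃) * ε) : √a < ε := by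
  rw [Real.sqrt_lt' (by positivity), mul_pow, Real.sq_sqrt (by positivity)] at hb
  rw [Real.sqrt_lt' hε]
  refine lt_of_mul_lt_mul_left ?_ hc₂.le
  calc c₂ * a ≤ c₃ * b := hab
    _ < c₃ * (c₂ / c₃ * ε ^ 2) := mul_lt_mul_of_pos_left hb hc₃
    _ = c₂ * ε ^ 2 := by field_simp

theorem stmt4_general {n : ℕ}
    (E : ℝ → (Fin n → ℝ) → Matrix (Fin n) (Fin n) ℝ)
    (F : ℝ → (Fin n → ℝ) → (Fin n → ℝ))
    (V Vt : ℝ → (Fin n → ℝ) → ℝ) (z : ℝ → (Fin n → ℝ) → Fin n → ℝ)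
    (hVC1 : ContDiff ℝ 1 (fun p : ℝ × (Fin n → ℝ) => V p.1 p.2))
    (c₁ : ℝ) (hc₁ : 0 ≤ c₁)
    (hgrad : ∀ t x h, 0 ≤ t →
      HasDerivAt (fun s : ℝ => V t (x + s • h)) ((((E t x)ᵀ) *ᵥ z t x) ⬝ᵥ h) 0)
    (hVt : ∀ t x, 0 ≤ t → HasDerivAt (fun s => V s x) (Vt t x) t)
    (hdec : ∀ t x, 0 ≤ t → Vt t x + z t x ⬝ᵥ F t x ≤ -c₁ * (x ⬝ᵥ x))
    (c₂ c₃ : ℝ) (hc₂ : 0 < c₂) (hc₃ : 0 < c₃)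
    (hlow : ∀ t x, 0 ≤ t → c₂ * (x ⬝ᵥ x) ≤ V t x)
    (hhigh : ∀ t x, 0 ≤ t → V t x ≤ c₃ * (x ⬝ᵥ x))
    (s : ℝ → (Fin n → ℝ) → ℝ → (Fin n → ℝ))
    (hinit : ∀ t₀, 0 ≤ t₀ → ∀ x₀, s t₀ x₀ t₀ = x₀)
    (hsol : ∀ t₀, 0 ≤ t₀ → ∀ x₀, ∀ t, t₀ ≤ t →
      ∃ d, HasDerivAt (s t₀ x₀) d t ∧ E t (s t₀ x₀ t) *ᵥ d = F t (s t₀ x₀ t)) :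
    ∀ ε > (0 : ℝ), ∃ δ > (0 : ℝ), ∀ t₀, 0 ≤ t₀ → ∀ x₀,
      Real.sqrt (x₀ ⬝ᵥ x₀) < δ →
      ∀ t, t₀ ≤ t → Real.sqrt (s t₀ x₀ t ⬝ᵥ s t₀ x₀ t) < ε := by
  intro ε hε
  refine ⟨√(c₂ / c₃) * ε, by positivity, fun t₀ ht₀ x₀ hx₀ t ht => ?_⟩
  have hdec' : ∀ t x, 0 ≤ t → Vt t x + z t x ⬝ᵥ F t x ≤ 0 := fun t x ht =>
    (hdec t x ht).trans (mul_nonpos_of_nonpos_of_nonneg (neg_nonpos.mpr hc₁)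
      (Finset.sum_nonneg fun i _ => mul_self_nonneg (x i)))
  have hanti := antitoneOn_lyapunov_comp_solution ht₀ (hVC1.differentiable one_ne_zero)
    hgrad hVt hdec' (hsol t₀ ht₀ x₀)
  have hsandwich : c₂ * (s t₀ x₀ t ⬝ᵥ s t₀ x₀ t) ≤ c₃ * (x₀ ⬝ᵥ x₀) :=
    calc c₂ * (s t₀ x₀ t ⬝ᵥ s t₀ x₀ t) ≤ V t (s t₀ x₀ t) := hlow t _ (ht₀.trans ht)
      _ ≤ V t₀ (s t₀ x₀ t₀) := hanti self_mem_Ici ht ht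
      _ ≤ c₃ * (x₀ ⬝ᵥ x₀) := by rw [hinit t₀ ht₀ x₀]; exact hhigh t₀ x₀ ht₀
  exact Real.sqrt_lt_of_mul_le_mul hc₂ hc₃ hε hsandwich hx₀

theorem stmt4 {n : ℕ}
    (E : ℝ → (Fin n → ℝ) → Matrix (Fin n) (Fin n) ℝ)
    (F : ℝ → (Fin n → ℝ) → (Fin n → ℝ))
    (hEcont : Continuous (fun p : ℝ × (Fin n → ℝ) => E p.1 p.2))
    (hFcont : Continuous (fun p : ℝ × (Fin n → ℝ) => F p.1 p.2))
    (hEinv : ∀ t x, 0 ≤ t → IsUnit (E t x))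
    (hF0 : ∀ t, 0 ≤ t → F t 0 = 0)
    (V Vt : ℝ → (Fin n → ℝ) → ℝ) (z : ℝ → (Fin n → ℝ) → Fin n → ℝ)
    (hVC1 : ContDiff ℝ 1 (fun p : ℝ × (Fin n → ℝ) => V p.1 p.2))
    (c₁ : ℝ) (hc₁ : 0 ≤ c₁)
    (hgrad : ∀ t x h, 0 ≤ t →
      HasDerivAt (fun s : ℝ => V t (x + s • h)) ((((E t x)ᵀ) *ᵥ z t x) ⬝ᵥ h) 0)
    (hVt : ∀ t x, 0 ≤ t → HasDerivAt (fun s => V s x) (Vt t x) t)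
    (hdec : ∀ t x, 0 ≤ t → Vt t x + z t x ⬝ᵥ F t x ≤ -c₁ * (x ⬝ᵥ x))
    (c₂ c₃ : ℝ) (hc₂ : 0 < c₂) (hc₃ : 0 < c₃)
    (hlow : ∀ t x, 0 ≤ t → c₂ * (x ⬝ᵥ x) ≤ V t x)
    (hhigh : ∀ t x, 0 ≤ t → V t x ≤ c₃ * (x ⬝ᵥ x))
    (s : ℝ → (Fin n → ℝ) → ℝ → (Fin n → ℝ))
    (hinit : ∀ t₀, 0 ≤ t₀ → ∀ x₀, s t₀ x₀ t₀ = x₀)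
    (hsol : ∀ t₀, 0 ≤ t₀ → ∀ x₀, ∀ t, t₀ ≤ t →
      ∃ d, HasDerivAt (s t₀ x₀) d t ∧ E t (s t₀ x₀ t) *ᵥ d = F t (s t₀ x₀ t))
    (huniq : ∀ t₀, 0 ≤ t₀ → ∀ x₀, ∀ ys : ℝ → (Fin n → ℝ),
      (ys t₀ = x₀ ∧ ∀ t, t₀ ≤ t →
        ∃ d, HasDerivAt ys d t ∧ E t (ys t) *ᵥ d = F t (ys t)) →
      ∀ t, t₀ ≤ t → ys t = s t₀ x₀ t) :
    ∀ ε > (0 : ℝ), ∃ δ > (0 : ℝ), ∀ t₀, 0 ≤ t₀ → ∀ x₀,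
      Real.sqrt (x₀ ⬝ᵥ x₀) < δ →
      ∀ t, t₀ ≤ t → Real.sqrt (s t₀ x₀ t ⬝ᵥ s t₀ x₀ t) < ε :=
  stmt4_general E F V Vt z hVC1 c₁ hc₁ hgrad hVt hdec c₂ c₃ hc₂ hc₃ hlow hhigh s hinit hsol
end

section
/- Consider the reduced matrices Ẽ(t) = V_r(t)^T Q(t)^T E(t) V_r(t) and K̃(t) = V_r(t)^T Q(t)^T (K(t) V_r(t) + E(t) V̇_r(t)) where (d/dt)(Q^T E) = Q^T K + K^T Q pointwise. Then (d/dt)(Ẽ(t)) = K̃(t) + K̃(t)^T for all t. -/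
/-!
Differentiating `Ẽ = V_rᵀ (QᵀE) V_r` by the product rule gives
`V̇_rᵀ (QᵀE) V_r + V_rᵀ (QᵀK + KᵀQ) V_r + V_rᵀ (QᵀE) V̇_r`. The middle term is
`V_rᵀ QᵀK V_r` plus its transpose, and since `QᵀE` is symmetric the outer two terms are
`V_rᵀ QᵀE V̇_r` and its transpose; together this is `K̃ + K̃ᵀ`.
-/

open Matrix

namespace Matrix

section EntrywiseDeriv

variable {𝕜 : Type*} [NontriviallyNormedField 𝕜] {l m n : Type*}

def HasEntrywiseDerivAt (A : 𝕜 → Matrix m n 𝕜) (A' : Matrix m n 𝕜) (t : 𝕜) : Prop :=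
  ∀ i j, HasDerivAt (fun s => A s i j) (A' i j) t

variable {A : 𝕜 → Matrix l m 𝕜} {B : 𝕜 → Matrix m n 𝕜} {A' : Matrix l m 𝕜}
  {B' : Matrix m n 𝕜} {t : 𝕜}

theorem HasEntrywiseDerivAt.transpose (hA : HasEntrywiseDerivAt A A' t) :
    HasEntrywiseDerivAt (fun s => (A s)ᵀ) A'ᵀ t :=
  fun i j => hA j i

theorem HasEntrywiseDerivAt.mul [Fintype m] (hA : HasEntrywiseDerivAt A A' t)
    (hB : HasEntrywiseDerivAt B B' t) :
    HasEntrywiseDerivAt (fun s => A s * B s) (A' * B t + A t * B') t := by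
  intro i j
  simp only [mul_apply, add_apply, ← Finset.sum_add_distrib]
  exact HasDerivAt.fun_sum fun k _ => (hA i k).mul (hB k j)

end EntrywiseDeriv

theorem transpose_mul_mul_add_transpose_of_symm {R : Type*} [CommRing R] {n r : Type*}
    [Fintype n] (E Q K : Matrix n n R) (V V' : Matrix n r R) (hsym : Eᵀ * Q = Qᵀ * E) :
    (V'ᵀ * (Qᵀ * E) + Vᵀ * (Qᵀ * K + Kᵀ * Q)) * V + Vᵀ * (Qᵀ * E) * V' =
      Vᵀ * Qᵀ * (K * V + E * V') + (Vᵀ * Qᵀ * (K * V + E * V'))ᵀ := by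
  simp only [transpose_mul, transpose_add, transpose_transpose, Matrix.mul_add, Matrix.add_mul,
    Matrix.mul_assoc]
  rw [← Matrix.mul_assoc Eᵀ, hsym]
  simp only [Matrix.mul_assoc]
  abel

end Matrix

theorem stmt9 {n r : ℕ}
    (E Q K : ℝ → Matrix (Fin n) (Fin n) ℝ)
    (Vr Vr' : ℝ → Matrix (Fin n) (Fin r) ℝ)
    (hsym : ∀ t, (E t)ᵀ * Q t = (Q t)ᵀ * E t)
    (hQE : ∀ t i j, HasDerivAt (fun s => ((Q s)ᵀ * E s) i j)
      (((Q t)ᵀ * K t + (K t)ᵀ * Q t) i j) t)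
    (hVr : ∀ t i j, HasDerivAt (fun s => Vr s i j) (Vr' t i j) t) :
    ∀ (t : ℝ) (i j : Fin r),
      HasDerivAt (fun s => ((Vr s)ᵀ * (Q s)ᵀ * E s * Vr s) i j)
        (((Vr t)ᵀ * (Q t)ᵀ * (K t * Vr t + E t * Vr' t) +
            ((Vr t)ᵀ * (Q t)ᵀ * (K t * Vr t + E t * Vr' t))ᵀ) i j) t := by
  intro t
  change HasEntrywiseDerivAt _ _ t
  rw [← transpose_mul_mul_add_transpose_of_symm _ _ _ _ _ (hsym t)]
  have hreassoc : (fun s => (Vr s)ᵀ * (Q s)ᵀ * E s * Vr s) =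
      fun s => (Vr s)ᵀ * ((Q s)ᵀ * E s) * Vr s := by
    funext s
    rw [Matrix.mul_assoc (Vr s)ᵀ]
  rw [hreassoc]
  have hV : HasEntrywiseDerivAt Vr (Vr' t) t := hVr t
  exact (hV.transpose.mul (hQE t)).mul hV
end

section
/- Let α, β, γ, ζ > 0, η = α/(4γζ), and let V = diag(v(u₁,β),…,v(u_{N+1},β)) with v(T,β) = exp(−β/T) for T > 0 and 0 otherwise. Then the block matrix R₂ = [[αγ I, −(α/(2η)) V], [−(α/(2η)) V, (ζ/η) V]] ∈ ℝ^{2(N+1), 2(N+1)} is symmetric and positive semi-definite. -/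
/-!
The matrix has diagonal blocks, so its quadratic form splits into a sum of binary forms
`a p² + 2 b p q + c q²` with `a = αγ`, `b = -2γζ w`, `c = 4γζ² w / α`, `w = v(uᵢ, β)`.
Each is nonnegative because `a, c ≥ 0` and `ac - b² = 4γ²ζ² w (1 - w) ≥ 0`, as `0 ≤ w ≤ 1`.
-/

open Matrix

section

variable {𝕜 : Type*} [Field 𝕜] [LinearOrder 𝕜] [IsStrictOrderedRing 𝕜]

theorem quadForm_nonneg_of_sq_le_mul {a b c : 𝕜} (ha : 0 ≤ a) (hc : 0 ≤ c) (hb : b ^ 2 ≤ a * c)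
    (p q : 𝕜) : 0 ≤ p * (a * p + b * q) + q * (b * p + c * q) := by
  rcases ha.eq_or_lt with rfl | ha
  · obtain rfl : b = 0 := by nlinarith
    nlinarith [sq_nonneg q]
  · -- a times the form is (a p + b q)² + (a c - b²) q²
    refine (mul_nonneg_iff_of_pos_left ha).1 ?_
    nlinarith [sq_nonneg (a * p + b * q), mul_nonneg (sub_nonneg.2 hb) (sq_nonneg q)]

variable [StarRing 𝕜] [TrivialStar 𝕜] {n : Type*} [Fintype n] [DecidableEq n]

theorem posSemidef_fromBlocks_diagonal {a b c : n → 𝕜} (ha : 0 ≤ a) (hc : 0 ≤ c)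
    (hb : ∀ i, b i ^ 2 ≤ a i * c i) :
    (fromBlocks (diagonal a) (diagonal b) (diagonal b) (diagonal c)).PosSemidef := by
  refine posSemidef_iff_dotProduct_mulVec.2 ⟨?_, fun x => ?_⟩
  · simp [IsHermitian, fromBlocks_transpose]
  · rw [star_trivial, ← Sum.elim_comp_inl_inr x, fromBlocks_mulVec, sumElim_dotProduct_sumElim]
    simp only [Sum.elim_comp_inl, Sum.elim_comp_inr, mulVec_diagonal, dotProduct, Pi.add_apply,
      Function.comp_apply, ← Finset.sum_add_distrib]
    exact Finset.sum_nonneg fun i _ => quadForm_nonneg_of_sq_le_mul (ha i) (hc i) (hb i) _ _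

end

theorem arrhenius_mem_Icc {T b : ℝ} (hb : 0 ≤ b) :
    (if 0 < T then Real.exp (-b / T) else 0) ∈ Set.Icc (0 : ℝ) 1 := by
  split_ifs with hT
  · refine ⟨(Real.exp_pos _).le, Real.exp_le_one_iff.2 ?_⟩
    exact div_nonpos_of_nonpos_of_nonneg (neg_nonpos.2 hb) hT.le
  · exact ⟨le_rfl, zero_le_one⟩

theorem stmt13 {N : ℕ} (α β γ ζ : ℝ)
    (hα : 0 < α) (hβ : 0 < β) (hγ : 0 < γ) (hζ : 0 < ζ)
    (u : Fin (N + 1) → ℝ)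
    (v : ℝ → ℝ → ℝ)
    (hv : ∀ T b : ℝ, v T b = if 0 < T then Real.exp (-b / T) else 0) :
    (Matrix.fromBlocks
      ((α * γ) • (1 : Matrix (Fin (N + 1)) (Fin (N + 1)) ℝ))
      ((-(α / (2 * (α / (4 * γ * ζ))))) • Matrix.diagonal (fun i => v (u i) β))
      ((-(α / (2 * (α / (4 * γ * ζ))))) • Matrix.diagonal (fun i => v (u i) β))
      ((ζ / (α / (4 * γ * ζ))) • Matrix.diagonal (fun i => v (u i) β))).PosSemidef := by
  have hw : ∀ i, v (u i) β ∈ Set.Icc 0 1 := fun i => hv (u i) β ▸ arrhenius_mem_Icc hβ.le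
  have h_off : -(α / (2 * (α / (4 * γ * ζ)))) = -(2 * γ * ζ) := by field_simp; ring
  have h_diag : ζ / (α / (4 * γ * ζ)) = 4 * γ * ζ ^ 2 / α := by field_simp
  rw [h_off, h_diag, smul_one_eq_diagonal, ← diagonal_smul, ← diagonal_smul]
  refine posSemidef_fromBlocks_diagonal (fun _ => by positivity)
    (fun i => mul_nonneg (by positivity) (hw i).1) fun i => ?_
  obtain ⟨hw0, hw1⟩ := hw i
  calc (-(2 * γ * ζ) • fun i => v (u i) β) i ^ 2 = 4 * γ ^ 2 * ζ ^ 2 * v (u i) β ^ 2 := by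
        simp only [Pi.smul_apply, smul_eq_mul]; ring
    _ ≤ 4 * γ ^ 2 * ζ ^ 2 * v (u i) β := by gcongr; exact pow_le_of_le_one hw0 hw1 two_ne_zero
    _ = α * γ * ((4 * γ * ζ ^ 2 / α) • fun i => v (u i) β) i := by
        simp only [Pi.smul_apply, smul_eq_mul]; field_simp
end
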